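/- arXiv:1507.04951 — 4 statements merged into one kernel-verified Lean document; each statement's English description precedes it below -/
import Mathlib

section
/- For every integer m ≥ 1 and every real number y, one has ∑_{a=0}^{m-1} C(m-1,a) · ∫_0^y x^{2a} (y-x)^{2(m-a)-1} / ((a+1)! · (m-a)!) dx = y^{2m} / (m+1)!. -/
/-!
The beta integral `∫₀^y x^p (y-x)^q dx = p! q! / (p+q+1)! · y^(p+q+1)` turns the `a`-th summand
into `(m-1)! / (2 (2m)!) · C_a · binom(2(m-a), m-a) · y^(2m)`, where `C_a` is a Catalan number.
The remaining sum is the convolution `∑_{i+j=n} C_i binom(2j, j) = binom(2n+2, n+1) / 2` with its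
`j = 0` term removed; the convolution follows from the Catalan recursion after symmetrising with
`binom(2j, j) = (j+1) C_j`.
-/

open Finset Nat intervalIntegral
open MeasureTheory (volume)

theorem integral_pow_succ_mul_sub_pow (y : ℝ) (p q : ℕ) :
    (q + 1) * ∫ x in (0 : ℝ)..y, x ^ (p + 1) * (y - x) ^ q =
      (p + 1) * ∫ x in (0 : ℝ)..y, x ^ p * (y - x) ^ (q + 1) := by
  have hderiv : ∀ x : ℝ, HasDerivAt (fun x => x ^ (p + 1) * (y - x) ^ (q + 1))
      ((p + 1) * (x ^ p * (y - x) ^ (q + 1)) - (q + 1) * (x ^ (p + 1) * (y - x) ^ q)) x := by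
    intro x
    refine ((hasDerivAt_pow (p + 1) x).fun_mul
      (((hasDerivAt_id' x).const_sub y).fun_pow (q + 1))).congr_deriv ?_
    push_cast
    ring
  have hint : ∀ r s : ℕ, IntervalIntegrable (fun x : ℝ => x ^ r * (y - x) ^ s) volume 0 y :=
    fun r s => Continuous.intervalIntegrable (by fun_prop) 0 y
  have hzero := integral_eq_sub_of_hasDerivAt (fun x _ => hderiv x)
    (((hint _ _).const_mul _).sub ((hint _ _).const_mul _))
  rw [integral_sub ((hint _ _).const_mul _) ((hint _ _).const_mul _), integral_const_mul,
    integral_const_mul] at hzero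
  simp only [sub_self, zero_pow (succ_ne_zero _), zero_mul, mul_zero, sub_zero] at hzero
  linarith

theorem integral_pow_mul_sub_pow (y : ℝ) (p q : ℕ) :
    ∫ x in (0 : ℝ)..y, x ^ p * (y - x) ^ q = p ! * q ! / (p + q + 1)! * y ^ (p + q + 1) := by
  induction p generalizing q with
  | zero =>
    simp only [pow_zero, one_mul, zero_add, factorial_zero, cast_one]
    rw [integral_comp_sub_left (fun x => x ^ q), sub_self, sub_zero, integral_pow,
      factorial_succ]
    push_cast
    field_simp
    ring
  | succ p ih =>
    have h := integral_pow_succ_mul_sub_pow y p q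
    rw [ih, show p + (q + 1) + 1 = p + 1 + q + 1 by ring] at h
    refine mul_left_cancel₀ (by positivity : (q + 1 : ℝ) ≠ 0) (h.trans ?_)
    push_cast [factorial_succ]
    ring

theorem centralBinom_mul_factorial_mul_factorial (n : ℕ) :
    centralBinom n * n ! * n ! = (2 * n)! := by
  rw [two_mul, centralBinom_eq_two_mul_choose, two_mul, add_choose_mul_factorial_mul_factorial]

theorem catalan_mul_factorial_mul_factorial_succ (n : ℕ) :
    catalan n * n ! * (n + 1)! = (2 * n)! := by
  rw [← centralBinom_mul_factorial_mul_factorial, ← succ_mul_catalan_eq_centralBinom,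
    factorial_succ]
  ring

theorem two_mul_sum_antidiagonal_catalan_mul_centralBinom (n : ℕ) :
    2 * ∑ ij ∈ antidiagonal n, catalan ij.1 * centralBinom ij.2 = centralBinom (n + 1) := by
  have hsymm : ∑ ij ∈ antidiagonal n, catalan ij.1 * centralBinom ij.2 =
      ∑ ij ∈ antidiagonal n, (ij.1 + 1) * (catalan ij.1 * catalan ij.2) := by
    rw [← Nat.sum_antidiagonal_swap]
    refine sum_congr rfl fun ij _ => ?_
    simp only [Prod.fst_swap, Prod.snd_swap, ← succ_mul_catalan_eq_centralBinom]
    ring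
  calc 2 * ∑ ij ∈ antidiagonal n, catalan ij.1 * centralBinom ij.2
      = ∑ ij ∈ antidiagonal n, (ij.1 + ij.2 + 2) * (catalan ij.1 * catalan ij.2) := by
        rw [two_mul]
        nth_rw 1 [hsymm]
        rw [← sum_add_distrib]
        refine sum_congr rfl fun ij _ => ?_
        rw [← succ_mul_catalan_eq_centralBinom]
        ring
    _ = (n + 2) * catalan (n + 1) := by
        rw [catalan_succ', mul_sum]
        refine sum_congr rfl fun ij hij => ?_
        rw [mem_antidiagonal.mp hij]
    _ = centralBinom (n + 1) := succ_mul_catalan_eq_centralBinom (n + 1)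

theorem sum_range_catalan_mul_centralBinom_sub_succ (n : ℕ) :
    ∑ a ∈ range (n + 1), catalan a * centralBinom (n - a + 1) = 2 * (n + 1) * catalan (n + 1) := by
  have h := two_mul_sum_antidiagonal_catalan_mul_centralBinom (n + 1)
  rw [Nat.sum_antidiagonal_succ', Nat.sum_antidiagonal_eq_sum_range_succ
    (fun i j => catalan i * centralBinom (j + 1))] at h
  have hcb : centralBinom (n + 2) = 2 * (2 * n + 3) * catalan (n + 1) := by
    refine Nat.eq_of_mul_eq_mul_left (by omega : 0 < n + 2) ?_
    rw [succ_mul_centralBinom_succ, ← succ_mul_catalan_eq_centralBinom]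
    ring
  simp only [centralBinom_zero, mul_one] at h
  linarith

theorem choose_mul_integral_pow_mul_sub_pow_div (a b : ℕ) (y : ℝ) :
    ((a + b).choose a : ℝ) *
        ∫ x in (0 : ℝ)..y, x ^ (2 * a) * (y - x) ^ (2 * b + 1) / ((a + 1)! * (b + 1)!) =
      (a + b)! / (2 * (2 * (a + b + 1))!) * (catalan a * centralBinom (b + 1)) *
        y ^ (2 * (a + b + 1)) := by
  have hchoose : ((a + b).choose a : ℝ) * a ! * b ! = (a + b)! := by
    rw [choose_symm_add]
    exact_mod_cast add_choose_mul_factorial_mul_factorial a b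
  have hcat : (catalan a : ℝ) * a ! * (a + 1)! = (2 * a)! := by
    exact_mod_cast catalan_mul_factorial_mul_factorial_succ a
  have hcb : (centralBinom (b + 1) : ℝ) * (b + 1) * b ! * b ! = 2 * (2 * b + 1)! := by
    have h := centralBinom_mul_factorial_mul_factorial (b + 1)
    rw [show 2 * (b + 1) = 2 * b + 1 + 1 by ring, factorial_succ b, factorial_succ (2 * b + 1)] at h
    refine mul_left_cancel₀ (by positivity : (b + 1 : ℝ) ≠ 0) ?_
    have h' : ((b + 1).centralBinom : ℝ) * ((b + 1) * b !) * ((b + 1) * b !) =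
        (2 * b + 1 + 1) * (2 * b + 1)! := by exact_mod_cast h
    linear_combination h'
  have hb : ((b + 1)! : ℝ) = (b + 1) * b ! := by push_cast [factorial_succ]; ring
  rw [integral_div, integral_pow_mul_sub_pow,
    show 2 * a + (2 * b + 1) + 1 = 2 * (a + b + 1) by ring, ← hcat, ← hchoose, hb]
  field_simp
  linear_combination (-((a + b).choose a * catalan a * y ^ (2 * (a + b + 1)) : ℝ)) * hcb

/-- Part (1) of Proposition `id`:
`∑_{a=0}^{m-1} C(m-1,a) ∫_0^y x^{2a}(y-x)^{2(m-a)-1}/((a+1)!(m-a)!) dx = y^{2m}/(m+1)!`. -/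
theorem stmt_0 (m : ℕ) (hm : 1 ≤ m) (y : ℝ) :
    ∑ a ∈ Finset.range m, (Nat.choose (m - 1) a : ℝ) *
      ∫ x in (0:ℝ)..y,
        x ^ (2 * a) * (y - x) ^ (2 * (m - a) - 1) /
          ((Nat.factorial (a + 1) : ℝ) * (Nat.factorial (m - a) : ℝ)) =
    y ^ (2 * m) / (Nat.factorial (m + 1) : ℝ) := by
  obtain ⟨n, rfl⟩ : ∃ n, m = n + 1 := ⟨m - 1, by omega⟩
  have hterm : ∀ a ∈ range (n + 1), ((n + 1 - 1).choose a : ℝ) *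
      ∫ x in (0 : ℝ)..y, x ^ (2 * a) * (y - x) ^ (2 * (n + 1 - a) - 1) /
        ((a + 1)! * (n + 1 - a)!) =
      n ! / (2 * (2 * (n + 1))!) * (catalan a * centralBinom (n - a + 1)) * y ^ (2 * (n + 1)) := by
    intro a ha
    obtain ⟨b, rfl⟩ : ∃ b, n = a + b := ⟨n - a, by have := mem_range.mp ha; omega⟩
    rw [show a + b + 1 - 1 = a + b by omega, show a + b + 1 - a = b + 1 by omega,
      show 2 * (b + 1) - 1 = 2 * b + 1 by omega, Nat.add_sub_cancel_left]
    exact choose_mul_integral_pow_mul_sub_pow_div a b y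
  have hsum : ∑ a ∈ range (n + 1), (catalan a * centralBinom (n - a + 1) : ℝ) =
      2 * (n + 1) * catalan (n + 1) := by
    exact_mod_cast sum_range_catalan_mul_centralBinom_sub_succ n
  have hcat : (catalan (n + 1) : ℝ) * (n + 1)! * (n + 1 + 1)! = (2 * (n + 1))! := by
    exact_mod_cast catalan_mul_factorial_mul_factorial_succ (n + 1)
  rw [sum_congr rfl hterm, ← sum_mul, ← mul_sum, hsum]
  field_simp
  rw [← hcat]
  push_cast [factorial_succ]
  ring
end

section
/- For every integer m ≥ 1 and every real number y, one has ∑_{a=0}^{m-1} C(m-1,a) · ∫_0^y x^{2a} (y-x)^{2(m-a)-1} / ((a+1)! · (m-a)!) dx = (y/2) · ∑_{a=0}^{m-1} C(m-1,a) · ∫_0^y x^{2a} (y-x)^{2(m-a-1)} / ((a+1)! · (m-a)!) dx. -/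
/-!
Splitting `(y - x)^(2k+1) = y (y - x)^(2k) - x (y - x)^(2k)` gives `I_m = y J_m - H_m`, where `H_m`
carries `x^(2a+1) (y - x)^(2(m-1-a))`. The substitution `x ↦ y - x` together with the reflection
`a ↦ m - 1 - a`, which preserves the weights `C(m-1,a) / ((a+1)! (m-a)!)`, turns `H_m` into `I_m`.
-/

open intervalIntegral

theorem integral_pow_mul_sub_pow_comm (p q : ℕ) (y : ℝ) :
    ∫ x in (0:ℝ)..y, x ^ p * (y - x) ^ q = ∫ x in (0:ℝ)..y, x ^ q * (y - x) ^ p := by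
  simpa [mul_comm] using
    integral_comp_sub_left (a := 0) (b := y) (fun x : ℝ => x ^ q * (y - x) ^ p) y

theorem integral_pow_mul_sub_pow_succ_add (p q : ℕ) (y : ℝ) :
    (∫ x in (0:ℝ)..y, x ^ p * (y - x) ^ (q + 1)) + ∫ x in (0:ℝ)..y, x ^ (p + 1) * (y - x) ^ q =
      y * ∫ x in (0:ℝ)..y, x ^ p * (y - x) ^ q := by
  rw [← integral_add ((by fun_prop : Continuous _).intervalIntegrable _ _)
    ((by fun_prop : Continuous _).intervalIntegrable _ _), ← integral_const_mul]
  congr 1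
  ext x
  ring

theorem sum_range_mul_integral_reflect (n : ℕ) (w : ℕ → ℝ) (hw : ∀ a ≤ n, w (n - a) = w a)
    (y : ℝ) :
    ∑ a ∈ Finset.range (n + 1), w a * ∫ x in (0:ℝ)..y, x ^ (2 * a + 1) * (y - x) ^ (2 * (n - a)) =
      ∑ a ∈ Finset.range (n + 1), w a * ∫ x in (0:ℝ)..y, x ^ (2 * a) * (y - x) ^ (2 * (n - a) + 1) := by
  rw [← Finset.sum_range_reflect]
  refine Finset.sum_congr rfl fun a ha => ?_
  have ha : a ≤ n := Nat.lt_succ_iff.mp (Finset.mem_range.mp ha)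
  rw [Nat.add_sub_cancel, hw a ha, Nat.sub_sub_self ha, integral_pow_mul_sub_pow_comm]

theorem choose_div_factorial_mul_factorial_reflect (n a : ℕ) (ha : a ≤ n) :
    (n.choose (n - a) : ℝ) / ((n - a + 1).factorial * (n + 1 - (n - a)).factorial) =
      n.choose a / ((a + 1).factorial * (n + 1 - a).factorial) := by
  rw [Nat.choose_symm ha, show n - a + 1 = n + 1 - a by omega,
    show n + 1 - (n - a) = a + 1 by omega, mul_comm]

theorem two_mul_sum_range_mul_integral_odd (n : ℕ) (w : ℕ → ℝ)
    (hw : ∀ a ≤ n, w (n - a) = w a) (y : ℝ) :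
    2 * ∑ a ∈ Finset.range (n + 1),
        w a * ∫ x in (0:ℝ)..y, x ^ (2 * a) * (y - x) ^ (2 * (n - a) + 1) =
      y * ∑ a ∈ Finset.range (n + 1),
        w a * ∫ x in (0:ℝ)..y, x ^ (2 * a) * (y - x) ^ (2 * (n - a)) := by
  rw [two_mul]
  nth_rw 2 [← sum_range_mul_integral_reflect n w hw]
  rw [← Finset.sum_add_distrib, Finset.mul_sum]
  refine Finset.sum_congr rfl fun a _ => ?_
  rw [← mul_add, integral_pow_mul_sub_pow_succ_add, mul_left_comm]

theorem stmt_3_general (m : ℕ) (y : ℝ) :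
    ∑ a ∈ Finset.range m, (Nat.choose (m - 1) a : ℝ) *
      ∫ x in (0:ℝ)..y,
        x ^ (2 * a) * (y - x) ^ (2 * (m - a) - 1) /
          ((Nat.factorial (a + 1) : ℝ) * (Nat.factorial (m - a) : ℝ)) =
    (y / 2) *
      ∑ a ∈ Finset.range m, (Nat.choose (m - 1) a : ℝ) *
        ∫ x in (0:ℝ)..y,
          x ^ (2 * a) * (y - x) ^ (2 * (m - a - 1)) /
            ((Nat.factorial (a + 1) : ℝ) * (Nat.factorial (m - a) : ℝ)) := by
  cases m with
  | zero => simp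
  | succ n =>
    set w : ℕ → ℝ := fun a => n.choose a / ((a + 1).factorial * (n + 1 - a).factorial)
    have hI : ∀ a ∈ Finset.range (n + 1), (n.choose a : ℝ) * ∫ x in (0:ℝ)..y,
        x ^ (2 * a) * (y - x) ^ (2 * (n + 1 - a) - 1) /
          ((a + 1).factorial * (n + 1 - a).factorial) =
        w a * ∫ x in (0:ℝ)..y, x ^ (2 * a) * (y - x) ^ (2 * (n - a) + 1) := by
      intro a ha
      have ha : a < n + 1 := Finset.mem_range.mp ha
      rw [show 2 * (n + 1 - a) - 1 = 2 * (n - a) + 1 by omega, integral_div]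
      ring
    have hJ : ∀ a, (n.choose a : ℝ) * ∫ x in (0:ℝ)..y,
        x ^ (2 * a) * (y - x) ^ (2 * (n + 1 - a - 1)) /
          ((a + 1).factorial * (n + 1 - a).factorial) =
        w a * ∫ x in (0:ℝ)..y, x ^ (2 * a) * (y - x) ^ (2 * (n - a)) := by
      intro a
      rw [show n + 1 - a - 1 = n - a by omega, integral_div]
      ring
    rw [Nat.add_sub_cancel, Finset.sum_congr rfl hI, Finset.sum_congr rfl fun a _ => hJ a]
    linarith [two_mul_sum_range_mul_integral_odd n w
      (fun a ha => choose_div_factorial_mul_factorial_reflect n a ha) y]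

/-- The reduction `I_m = (y/2) · J_m` from the proof of Proposition `id`. -/
theorem stmt_3 (m : ℕ) (hm : 1 ≤ m) (y : ℝ) :
    ∑ a ∈ Finset.range m, (Nat.choose (m - 1) a : ℝ) *
      ∫ x in (0:ℝ)..y,
        x ^ (2 * a) * (y - x) ^ (2 * (m - a) - 1) /
          ((Nat.factorial (a + 1) : ℝ) * (Nat.factorial (m - a) : ℝ)) =
    (y / 2) *
      ∑ a ∈ Finset.range m, (Nat.choose (m - 1) a : ℝ) *
        ∫ x in (0:ℝ)..y,
          x ^ (2 * a) * (y - x) ^ (2 * (m - a - 1)) /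
            ((Nat.factorial (a + 1) : ℝ) * (Nat.factorial (m - a) : ℝ)) :=
  stmt_3_general m y
end

section
/- Let f : ℝ → ℝ be defined by f(x) = ∑_{m=0}^∞ x^{2m} / (m! · (m+1)!), and for λ > 2 let F(λ) = ∫_0^∞ e^{-λx} f(x) dx (the Laplace transform of f). Then for every real λ > 2, F(λ)² = λ·F(λ) − 1. -/
open MeasureTheory Real Set Nat

/-!
Term by term, the Laplace transform of `x^{2m}/(m!(m+1)!)` is `C_m/λ^{2m+1}`, where
`C_m = (2m)!/(m!(m+1)!)` is the `m`-th Catalan number. Hence `F(λ) = λ⁻¹ C(λ⁻²)` with `C` the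
Catalan generating function, which converges for `|x| < 1/4` because `C_m ≤ 4^m`. Catalan's
recurrence `C_{n+1} = ∑ C_i C_{n-i}` says `C(x) = 1 + x C(x)²`, and at `x = λ⁻²` this is
`F² = λF - 1`.
-/

lemma catalan_le_four_pow (n : ℕ) : catalan n ≤ 4 ^ n :=
  (Nat.le_mul_of_pos_left _ n.succ_pos).trans <|
    (succ_mul_catalan_eq_centralBinom n).trans_le (Nat.centralBinom_le_four_pow n)

lemma catalan_eq_factorial_div (n : ℕ) :
    (catalan n : ℝ) = (2 * n)! / (n ! * (n + 1)!) := by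
  have h : ((n + 1 : ℕ) : ℝ) * catalan n = (2 * n)! / (n ! * n !) := by
    rw [← Nat.cast_mul, succ_mul_catalan_eq_centralBinom, Nat.centralBinom_eq_two_mul_choose,
      Nat.cast_choose ℝ (by omega), show 2 * n - n = n by omega]
  rw [eq_div_iff (by positivity)] at h
  rw [Nat.factorial_succ, Nat.cast_mul, eq_div_iff (by positivity)]
  linear_combination h

noncomputable def catalanGF (x : ℝ) : ℝ := ∑' n, (catalan n : ℝ) * x ^ n

lemma summable_norm_catalan_mul_pow {x : ℝ} (hx : |x| < 1 / 4) :
    Summable fun n ↦ ‖(catalan n : ℝ) * x ^ n‖ := by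
  refine .of_nonneg_of_le (fun n ↦ norm_nonneg _) (fun n ↦ ?_)
    (summable_geometric_of_lt_one (by positivity) (by linarith : 4 * |x| < 1))
  simp only [norm_mul, norm_pow, Real.norm_eq_abs, Nat.abs_cast, mul_pow]
  gcongr
  exact_mod_cast catalan_le_four_pow n

lemma catalanGF_eq_one_add_mul_sq {x : ℝ} (hx : |x| < 1 / 4) :
    catalanGF x = 1 + x * catalanGF x ^ 2 := by
  have hsum := summable_norm_catalan_mul_pow hx
  have hsq : catalanGF x ^ 2 = ∑' n, (catalan (n + 1) : ℝ) * x ^ n := by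
    rw [sq, catalanGF, tsum_mul_tsum_eq_tsum_sum_antidiagonal_of_summable_norm hsum hsum]
    refine tsum_congr fun n ↦ ?_
    rw [catalan_succ', Nat.cast_sum, Finset.sum_mul]
    refine Finset.sum_congr rfl fun kl hkl ↦ ?_
    rw [← Finset.HasAntidiagonal.mem_antidiagonal.1 hkl]
    push_cast
    ring
  rw [hsq, ← tsum_mul_left, catalanGF, hsum.of_norm.tsum_eq_zero_add]
  simp only [catalan_zero, Nat.cast_one, pow_zero, mul_one, pow_succ]
  congr 1
  exact tsum_congr fun n ↦ by ring

lemma integral_exp_neg_mul_mul_pow {r : ℝ} (hr : 0 < r) (n : ℕ) :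
    ∫ x in Ioi 0, exp (-r * x) * x ^ n = n ! / r ^ (n + 1) := by
  have h := integral_rpow_mul_exp_neg_mul_Ioi (a := n + 1) (by positivity) hr
  rw [add_sub_cancel_right, Real.Gamma_nat_eq_factorial, ← Nat.cast_succ, Real.rpow_natCast,
    one_div, inv_pow] at h
  rw [div_eq_inv_mul, ← h]
  refine setIntegral_congr_fun measurableSet_Ioi fun x _ ↦ ?_
  rw [Real.rpow_natCast, neg_mul, mul_comm]

lemma integrableOn_exp_neg_mul_mul_pow {r : ℝ} (hr : 0 < r) (n : ℕ) :
    IntegrableOn (fun x ↦ exp (-r * x) * x ^ n) (Ioi 0) := by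
  refine (integrableOn_rpow_mul_exp_neg_mul_rpow (s := n) (p := 1)
    (by linarith [n.cast_nonneg (α := ℝ)]) one_pos hr).congr_fun (fun x _ ↦ ?_) measurableSet_Ioi
  simp only [Real.rpow_one, Real.rpow_natCast, mul_comm]

lemma integral_exp_neg_mul_mul_pow_div_factorial {r : ℝ} (hr : 0 < r) (m : ℕ) :
    ∫ x in Ioi 0, exp (-r * x) * (x ^ (2 * m) / (m ! * (m + 1)!)) =
      r⁻¹ * ((catalan m : ℝ) * (r⁻¹ ^ 2) ^ m) := by
  simp_rw [mul_div_assoc']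
  rw [integral_div, integral_exp_neg_mul_mul_pow hr, catalan_eq_factorial_div, ← pow_mul,
    inv_pow, _root_.pow_succ']
  field_simp

lemma abs_inv_sq_lt_one_div_four {r : ℝ} (hr : 2 < r) : |r⁻¹ ^ 2| < 1 / 4 := by
  rw [abs_of_nonneg (by positivity), inv_pow, show (1 / 4 : ℝ) = (2 ^ 2)⁻¹ by norm_num]
  gcongr

lemma integral_exp_neg_mul_mul_tsum {r : ℝ} (hr : 2 < r) :
    ∫ x in Ioi 0, exp (-r * x) * ∑' m : ℕ, x ^ (2 * m) / (m ! * (m + 1)!) =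
      r⁻¹ * catalanGF (r⁻¹ ^ 2) := by
  have hr0 : 0 < r := by linarith
  have hint (m : ℕ) :
      IntegrableOn (fun x ↦ exp (-r * x) * (x ^ (2 * m) / (m ! * (m + 1)!))) (Ioi 0) := by
    simp_rw [mul_div_assoc']
    exact (integrableOn_exp_neg_mul_mul_pow hr0 _).div_const _
  have hnorm (m : ℕ) : ∫ x in Ioi 0, ‖exp (-r * x) * (x ^ (2 * m) / (m ! * (m + 1)!))‖ =
      ∫ x in Ioi 0, exp (-r * x) * (x ^ (2 * m) / (m ! * (m + 1)!)) :=
    integral_congr_ae <| .of_forall fun x ↦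
      Real.norm_of_nonneg (mul_nonneg (exp_pos _).le
        (div_nonneg ((even_two_mul m).pow_nonneg x) (by positivity)))
  simp_rw [← tsum_mul_left]
  rw [← integral_tsum_of_summable_integral_norm hint, catalanGF, ← tsum_mul_left]
  · exact tsum_congr (integral_exp_neg_mul_mul_pow_div_factorial hr0)
  · simp_rw [hnorm, integral_exp_neg_mul_mul_pow_div_factorial hr0]
    exact (summable_norm_catalan_mul_pow (abs_inv_sq_lt_one_div_four hr)).of_norm.mul_left _

/-- The quadratic functional equation `F(λ)² = λF(λ) − 1` for the Laplace transform of
`f(x) = ∑ x^{2m}/(m!(m+1)!)`. -/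
theorem stmt_5 (f : ℝ → ℝ)
    (hf : ∀ x : ℝ, f x =
      ∑' m : ℕ, x ^ (2 * m) / ((Nat.factorial m : ℝ) * (Nat.factorial (m + 1) : ℝ)))
    (F : ℝ → ℝ)
    (hF : ∀ l : ℝ, 2 < l → F l = ∫ x in Set.Ioi (0:ℝ), Real.exp (-l * x) * f x)
    (l : ℝ) (hl : 2 < l) :
    F l ^ 2 = l * F l - 1 := by
  have hFl : F l = l⁻¹ * catalanGF (l⁻¹ ^ 2) := by
    simp_rw [hF l hl, hf]
    exact integral_exp_neg_mul_mul_tsum hl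
  have hquad := catalanGF_eq_one_add_mul_sq (abs_inv_sq_lt_one_div_four hl)
  have hl_inv : l * l⁻¹ = 1 := mul_inv_cancel₀ (by linarith)
  rw [hFl]
  linear_combination -hquad - catalanGF (l⁻¹ ^ 2) * hl_inv
end

section
/- Let V be a vector space over ℝ, let m be a natural number, and let x_1, …, x_{2m+1} be elements of V. In the exterior algebra Λ(V), with ι : V → Λ(V) the canonical inclusion, one has (∑_{i=1}^{2m+1} ι(x_i)) · (∑_{1 ≤ i < j ≤ 2m+1} ι(x_i)·ι(x_j))^m = m! • (ι(x_1)·ι(x_2)·⋯·ι(x_{2m+1})), where the product on the right is taken in the order x_1, x_2, …, x_{2m+1}. -/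
/-!
Write `eᵢ = ι xᵢ`, `ω = ∑_{i<j} eᵢ eⱼ` and `s = ∑ eᵢ`. Products of two vectors commute with
everything, so `ω` is central. Prepending a vector `a` to the family replaces `ω` by `ω + E` with
`E = ι a * s`, where `E` is central, `E² = 0` and `(ι a + s) E = 0`; hence
`(ω + E)ᵏ = ωᵏ + k ωᵏ⁻¹ E` and `(ι a + s)(ω + E)ᵏ = (ι a + s) ωᵏ`. Induction on the length,
alternating between the invariants `ωᵐ = m! e₁⋯e₂ₘ`, `s ωᵐ = 0`, `ωᵐ⁺¹ = 0` for length `2m` and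
`s ωᵐ = m! e₁⋯e₂ₘ₊₁`, `ωᵐ⁺¹ = 0` for length `2m + 1`, gives the identity.
-/

theorem Commute.add_pow_of_mul_self_eq_zero {A : Type*} [Semiring A] {x e : A}
    (h : Commute x e) (he : e * e = 0) (n : ℕ) :
    (x + e) ^ n = x ^ n + n • (x ^ (n - 1) * e) := by
  induction n with
  | zero => simp
  | succ n ih =>
    rcases n with _ | n
    · simp
    have hxe : x ^ n * e * x = x ^ (n + 1) * e := by
      rw [mul_assoc, h.symm.eq, ← mul_assoc, ← pow_succ]
    rw [pow_succ, ih, add_tsub_cancel_right, add_tsub_cancel_right, add_mul, mul_add, mul_add,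
      smul_mul_assoc, smul_mul_assoc, hxe, mul_assoc, he, mul_zero, smul_zero, add_zero,
      ← pow_succ, succ_nsmul' _ (n + 1), add_assoc]

open Nat

namespace ExteriorAlgebra

variable {R M : Type*} [CommRing R] [AddCommGroup M] [Module R M]

theorem ι_mul_ι_anticomm (u v : M) : ι R u * ι R v = -(ι R v * ι R u) :=
  eq_neg_of_add_eq_zero_left (ι_add_mul_swap u v)

theorem commute_ι_mul_ι (u v : M) (z : ExteriorAlgebra R M) : Commute (ι R u * ι R v) z := by
  induction z using ExteriorAlgebra.induction with
  | algebraMap r => exact Algebra.commute_algebraMap_right r _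
  | ι w =>
    show _ = _
    rw [mul_assoc, ι_mul_ι_anticomm v w, mul_neg, ← mul_assoc, ι_mul_ι_anticomm u w, neg_mul,
      neg_neg, mul_assoc]
  | mul a b ha hb => exact ha.mul_right hb
  | add a b ha hb => exact ha.add_right hb

theorem ι_mul_ι_mul_ι_self (u v : M) : ι R u * ι R v * ι R u = 0 := by
  rw [ι_mul_ι_anticomm u v, neg_mul, mul_assoc, ι_sq_zero, mul_zero, neg_zero]

theorem ι_add_mul_ι_mul_ι (u v : M) : ι R (u + v) * (ι R u * ι R v) = 0 := by
  rw [map_add, add_mul, ← mul_assoc, ι_sq_zero, zero_mul, zero_add, ← mul_assoc,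
    ι_mul_ι_mul_ι_self]

theorem ιMulti_cons {n : ℕ} (a : M) (f : Fin n → M) :
    ιMulti R (n + 1) (Fin.cons a f) = ι R a * ιMulti R n f := by
  simp [ιMulti_succ_apply, Matrix.vecTail]

variable (R) in
def pairSum {n : ℕ} (f : Fin n → M) : ExteriorAlgebra R M :=
  ∑ i, ∑ j ∈ Finset.Ioi i, ι R (f i) * ι R (f j)

theorem commute_pairSum {n : ℕ} (f : Fin n → M) (z : ExteriorAlgebra R M) :
    Commute (pairSum R f) z :=
  Commute.sum_left _ _ _ fun _ _ => Commute.sum_left _ _ _ fun _ _ => commute_ι_mul_ι _ _ z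

section Cons

variable {n : ℕ} (a : M) (f : Fin n → M)

theorem pairSum_cons :
    pairSum R (Fin.cons a f) = pairSum R f + ι R a * ι R (∑ i, f i) := by
  simp only [pairSum, Fin.sum_univ_succ, Fin.sum_Ioi_zero, Fin.sum_Ioi_succ, Fin.cons_zero,
    Fin.cons_succ, map_sum, Finset.mul_sum, add_comm]

theorem pairSum_cons_pow (k : ℕ) :
    pairSum R (Fin.cons a f) ^ k =
      pairSum R f ^ k + k • (ι R a * ι R (∑ i, f i) * pairSum R f ^ (k - 1)) := by
  have hsq : ι R a * ι R (∑ i, f i) * (ι R a * ι R (∑ i, f i)) = 0 := by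
    rw [← mul_assoc, ι_mul_ι_mul_ι_self, zero_mul]
  rw [pairSum_cons, (commute_pairSum f _).add_pow_of_mul_self_eq_zero hsq,
    ((commute_pairSum f _).pow_left _).eq]

theorem ι_sum_cons_mul_pairSum_cons_pow (k : ℕ) :
    ι R (∑ i, Fin.cons a f i) * pairSum R (Fin.cons a f) ^ k =
      ι R (∑ i, Fin.cons a f i) * pairSum R f ^ k := by
  rw [pairSum_cons_pow, mul_add, mul_smul_comm, Fin.sum_cons, ← mul_assoc, ι_add_mul_ι_mul_ι,
    zero_mul, smul_zero, add_zero]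

theorem ι_sum_cons_mul_pairSum_cons_pow_eq_factorial_smul {m : ℕ}
    (hpow : pairSum R f ^ m = m ! • ιMulti R n f)
    (hsum : ι R (∑ i, f i) * pairSum R f ^ m = 0) :
    ι R (∑ i, Fin.cons a f i) * pairSum R (Fin.cons a f) ^ m =
      m ! • ιMulti R (n + 1) (Fin.cons a f) := by
  rw [ι_sum_cons_mul_pairSum_cons_pow, Fin.sum_cons, map_add, add_mul, hsum, add_zero, hpow,
    mul_smul_comm, ιMulti_cons]

theorem pairSum_cons_pow_succ_eq_zero {m : ℕ} (hsum : ι R (∑ i, f i) * pairSum R f ^ m = 0)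
    (hvanish : pairSum R f ^ (m + 1) = 0) : pairSum R (Fin.cons a f) ^ (m + 1) = 0 := by
  rw [pairSum_cons_pow, hvanish, add_tsub_cancel_right, mul_assoc, hsum, mul_zero, smul_zero,
    add_zero]

theorem pairSum_cons_pow_succ {m : ℕ}
    (hsum : ι R (∑ i, f i) * pairSum R f ^ m = m ! • ιMulti R n f)
    (hvanish : pairSum R f ^ (m + 1) = 0) :
    pairSum R (Fin.cons a f) ^ (m + 1) = (m + 1)! • ιMulti R (n + 1) (Fin.cons a f) := by
  rw [pairSum_cons_pow, hvanish, zero_add, add_tsub_cancel_right, mul_assoc, hsum, mul_smul_comm,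
    smul_smul, ιMulti_cons, Nat.factorial_succ]

end Cons

theorem pairSum_pow_two_mul (m : ℕ) (f : Fin (2 * m) → M) :
    pairSum R f ^ m = m ! • ιMulti R (2 * m) f ∧ ι R (∑ i, f i) * pairSum R f ^ m = 0 ∧
      pairSum R f ^ (m + 1) = 0 := by
  induction m with
  | zero => simp [pairSum]
  | succ m ih =>
    obtain ⟨a, b, g, rfl⟩ : ∃ (a b : M) (g : Fin (2 * m) → M), f = Fin.cons a (Fin.cons b g) :=
      ⟨f 0, Fin.tail f 0, Fin.tail (Fin.tail f), by simp only [Fin.cons_self_tail]⟩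
    obtain ⟨hpow, hsum, hvanish⟩ := ih g
    have hodd := ι_sum_cons_mul_pairSum_cons_pow_eq_factorial_smul b g hpow hsum
    have hvanish' := pairSum_cons_pow_succ_eq_zero b g hsum hvanish
    refine ⟨pairSum_cons_pow_succ a _ hodd hvanish',
      (ι_sum_cons_mul_pairSum_cons_pow a _ _).trans ?_, pairSum_cons_pow_succ_eq_zero a _ ?_ ?_⟩
    · rw [hvanish', mul_zero]
    · rw [hvanish', mul_zero]
    · rw [pow_succ, hvanish', zero_mul]

theorem ι_sum_mul_pairSum_pow_two_mul_add_one (m : ℕ) (f : Fin (2 * m + 1) → M) :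
    ι R (∑ i, f i) * pairSum R f ^ m = m ! • ιMulti R (2 * m + 1) f := by
  obtain ⟨a, g, rfl⟩ : ∃ (a : M) (g : Fin (2 * m) → M), f = Fin.cons a g :=
    ⟨f 0, Fin.tail f, (Fin.cons_self_tail f).symm⟩
  obtain ⟨hpow, hsum, -⟩ := pairSum_pow_two_mul (R := R) m g
  exact ι_sum_cons_mul_pairSum_cons_pow_eq_factorial_smul a g hpow hsum

end ExteriorAlgebra

/-- The exterior-algebra identity
`(∑ ι xᵢ) · (∑_{i<j} ι xᵢ · ι xⱼ)^m = m! • (ι x₁ · ⋯ · ι x_{2m+1})`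
used in the proof of the power-of-2 lemma. -/
theorem stmt_9 (V : Type*) [AddCommGroup V] [Module ℝ V] (m : ℕ)
    (x : Fin (2 * m + 1) → V) :
    (∑ i, ExteriorAlgebra.ι ℝ (x i)) *
        (∑ i, ∑ j ∈ Finset.Ioi i,
          ExteriorAlgebra.ι ℝ (x i) * ExteriorAlgebra.ι ℝ (x j)) ^ m =
      Nat.factorial m • (List.ofFn fun i => ExteriorAlgebra.ι ℝ (x i)).prod := by
  rw [← map_sum]
  exact ExteriorAlgebra.ι_sum_mul_pairSum_pow_two_mul_add_one m x
end
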